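/- Let k be a field, let E₁ and E₂ be elliptic curves over k (smooth Weierstrass curves, whose k-rational points form abelian groups), and let P₀ ∈ E₁(k) satisfy 2·P₀ = 0. Let T be an abelian group and c : E₁(k) × E₂(k) → T a function such that: (i) c(P, Q) = c(P + P₀, −Q) for all P ∈ E₁(k), Q ∈ E₂(k); (ii) the function z(P, Q) := c(P, Q) − c(P, 0) − c(0, Q) + c(0, 0) is biadditive (additive in each variable separately); and (iii) 2·(c(P₀, Q) − c(0, Q)) = 0 for all Q ∈ E₂(k). Then 4·z(P, Q) = 0 for all P ∈ E₁(k) and Q ∈ E₂(k). -/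

import Mathlib

/-!
Write `z` for the mixed difference of `c`. The symmetry `c (P, Q) = c (P + P₀, -Q)` turns
`z (P, -Q)` into `z (P + P₀, Q) - z (P₀, Q)`. Biadditivity makes the left side `-z (P, Q)` and the
right side `z (P, Q)`, so `z` is already killed by `2`.
-/

namespace MixedDiff

variable {A B T : Type*} [AddCommGroup A] [AddCommGroup B] [AddCommGroup T]

def mixedDiff (c : A × B → T) (p : A × B) : T :=
  c p - c (p.1, 0) - c (0, p.2) + c (0, 0)

theorem mixedDiff_neg_right {c : A × B → T} {a₀ : A}
    (hc : ∀ a b, c (a, b) = c (a + a₀, -b)) (a : A) (b : B) :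
    mixedDiff c (a, -b) = mixedDiff c (a + a₀, b) - mixedDiff c (a₀, b) := by
  have h₁ : c (a, -b) = c (a + a₀, b) := by simpa using hc a (-b)
  have h₂ : c (a, 0) = c (a + a₀, 0) := by simpa using hc a 0
  have h₃ : c (0, -b) = c (a₀, b) := by simpa using hc 0 (-b)
  have h₄ : c (0, 0) = c (a₀, 0) := by simpa using hc 0 0
  simp only [mixedDiff]
  rw [h₁, h₂, h₃, h₄]
  abel

theorem two_nsmul_mixedDiff_eq_zero {c : A × B → T} {a₀ : A}
    (hc : ∀ a b, c (a, b) = c (a + a₀, -b))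
    (hleft : ∀ a a' b, mixedDiff c (a + a', b) = mixedDiff c (a, b) + mixedDiff c (a', b))
    (hright : ∀ a b b', mixedDiff c (a, b + b') = mixedDiff c (a, b) + mixedDiff c (a, b'))
    (a : A) (b : B) :
    2 • mixedDiff c (a, b) = 0 := by
  have hneg : mixedDiff c (a, -b) = -mixedDiff c (a, b) :=
    (AddMonoidHom.mk' (fun b => mixedDiff c (a, b)) (hright a)).map_neg b
  have hself : -mixedDiff c (a, b) = mixedDiff c (a, b) := by
    rw [← hneg, mixedDiff_neg_right hc, hleft, add_sub_cancel_right]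
  rw [two_nsmul]
  exact neg_eq_iff_add_eq_zero.mp hself

end MixedDiff

open MixedDiff

open Classical in
theorem stmt_3_general {k : Type*} [Field k]
    (E₁ E₂ : WeierstrassCurve k)
    (P₀ : E₁.toAffine.Point)
    {T : Type*} [AddCommGroup T]
    (c : E₁.toAffine.Point × E₂.toAffine.Point → T)
    (hinv : ∀ (P : E₁.toAffine.Point) (Q : E₂.toAffine.Point),
      c (P, Q) = c (P + P₀, -Q))
    (z : E₁.toAffine.Point × E₂.toAffine.Point → T)
    (hz : ∀ (P : E₁.toAffine.Point) (Q : E₂.toAffine.Point),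
      z (P, Q) = c (P, Q) - c (P, 0) - c (0, Q) + c (0, 0))
    (hleft : ∀ (P P' : E₁.toAffine.Point) (Q : E₂.toAffine.Point),
      z (P + P', Q) = z (P, Q) + z (P', Q))
    (hright : ∀ (P : E₁.toAffine.Point) (Q Q' : E₂.toAffine.Point),
      z (P, Q + Q') = z (P, Q) + z (P, Q')) :
    ∀ (P : E₁.toAffine.Point) (Q : E₂.toAffine.Point), 4 • z (P, Q) = 0 := by
  obtain rfl : z = mixedDiff c := funext fun p => hz p.1 p.2
  intro P Q
  rw [show 4 = 2 * 2 from rfl, mul_nsmul, two_nsmul_mixedDiff_eq_zero hinv hleft hright,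
    nsmul_zero]

open Classical in
/-- the core of the proof of the main theorem for bielliptic surfaces of
Type 1.  Let `E₁`, `E₂` be elliptic curves over a field `k` (smooth Weierstrass curves,
whose `k`-rational points form abelian groups), let `P₀ ∈ E₁(k)` be 2-torsion, and let
`c : E₁(k) × E₂(k) → T` satisfy (i) `c (P, Q) = c (P + P₀, -Q)`, (ii) the associated
`z (P, Q) = c (P, Q) - c (P, 0) - c (0, Q) + c (0, 0)` is biadditive, and
(iii) `2 • (c (P₀, Q) - c (0, Q)) = 0` for all `Q`.  Then `4 • z (P, Q) = 0`. -/
theorem stmt_3 {k : Type*} [Field k]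
    (E₁ E₂ : WeierstrassCurve k) [E₁.IsElliptic] [E₂.IsElliptic]
    (P₀ : E₁.toAffine.Point) (hP₀ : 2 • P₀ = 0)
    {T : Type*} [AddCommGroup T]
    (c : E₁.toAffine.Point × E₂.toAffine.Point → T)
    (hinv : ∀ (P : E₁.toAffine.Point) (Q : E₂.toAffine.Point),
      c (P, Q) = c (P + P₀, -Q))
    (z : E₁.toAffine.Point × E₂.toAffine.Point → T)
    (hz : ∀ (P : E₁.toAffine.Point) (Q : E₂.toAffine.Point),
      z (P, Q) = c (P, Q) - c (P, 0) - c (0, Q) + c (0, 0))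
    (hleft : ∀ (P P' : E₁.toAffine.Point) (Q : E₂.toAffine.Point),
      z (P + P', Q) = z (P, Q) + z (P', Q))
    (hright : ∀ (P : E₁.toAffine.Point) (Q Q' : E₂.toAffine.Point),
      z (P, Q + Q') = z (P, Q) + z (P, Q'))
    (htor : ∀ Q : E₂.toAffine.Point, 2 • (c (P₀, Q) - c (0, Q)) = 0) :
    ∀ (P : E₁.toAffine.Point) (Q : E₂.toAffine.Point), 4 • z (P, Q) = 0 :=
  stmt_3_general E₁ E₂ P₀ c hinv z hz hleft hright
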